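/- arXiv:1111.6224 — 8 statements merged into one kernel-verified Lean document; each statement's English description precedes it below -/
import Mathlib

section
/- For a point x = (x_1,…,x_d) ∈ [0,1]^d, the volume of the set B_{d-1}(x) of points in [0,1]^d that (d-1)-dominate x equals ∑_{ℓ=1}^{d} ∏_{j≠ℓ} x_j − (d−1) ∏_{j=1}^{d} x_j. -/
/-!
Up to the null set of points that agree with `x` in all coordinates but one, `B_{d-1}(x)` is the
union of the `d` boxes `[0, x[ℓ ↦ 1]]`, where `x[ℓ ↦ 1]` is `x` with its `ℓ`-th coordinate raised
to `1`. Any two of these boxes meet exactly in `[0, x]`, so the union has volume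
`∑_ℓ vol [0, x[ℓ ↦ 1]] - (d - 1) vol [0, x] = ∑_ℓ ∏_{j ≠ ℓ} x_j - (d - 1) ∏_j x_j`.
-/

open MeasureTheory Finset

/-- `p` k-dominates `q`: `p j ≤ q j` in at least `k` coordinates, with strict
inequality in at least one of those coordinates. -/
def KDominates {d : ℕ} (k : ℕ) (p q : Fin d → ℝ) : Prop :=
  ∃ S : Finset (Fin d), k ≤ S.card ∧ (∀ j ∈ S, p j ≤ q j) ∧ ∃ j ∈ S, p j < q j

open Set Function Filter

theorem measure_iUnion_fintype_ne_top {α ι : Type*} [MeasurableSpace α] {μ : Measure α}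
    [Fintype ι] {A : ι → Set α} (hfin : ∀ i, μ (A i) ≠ ⊤) : μ (⋃ i, A i) ≠ ⊤ :=
  ((measure_iUnion_fintype_le μ A).trans_lt (ENNReal.sum_lt_top.2 fun i _ ↦ (hfin i).lt_top)).ne

theorem measureReal_iUnion_of_pairwise_inter_eq {α ι : Type*} [MeasurableSpace α]
    {μ : Measure α} [Fintype ι] [Nonempty ι] {A : ι → Set α} {C : Set α}
    (hA : ∀ i, MeasurableSet (A i)) (hC : MeasurableSet C) (hCA : ∀ i, C ⊆ A i)
    (hAA : Pairwise fun i j ↦ A i ∩ A j = C) (hfin : ∀ i, μ (A i) ≠ ⊤) :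
    μ.real (⋃ i, A i) = ∑ i, μ.real (A i) - (Fintype.card ι - 1) * μ.real C := by
  have hCfin : μ C ≠ ⊤ := measure_ne_top_of_subset (hCA (Classical.arbitrary ι)) (hfin _)
  have hdisj : Pairwise (Disjoint on fun i ↦ A i \ C) := fun i j hij ↦
    Set.disjoint_left.2 fun y hi hj ↦ hi.2 (hAA hij ▸ ⟨hi.1, hj.1⟩)
  have hCU : C ∪ ⋃ i, A i = ⋃ i, A i :=
    union_eq_right.2 (subset_iUnion_of_subset _ (hCA (Classical.arbitrary ι)))
  calc μ.real (⋃ i, A i) = μ.real C + ∑ i, μ.real (A i \ C) := by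
        rw [← measureReal_iUnion_fintype hdisj (fun i ↦ (hA i).diff hC)
          (fun i ↦ measure_ne_top_of_subset sdiff_subset (hfin i)), ← iUnion_sdiff,
          measureReal_add_sdiff hC hCfin (measure_iUnion_fintype_ne_top hfin), hCU]
    _ = ∑ i, μ.real (A i) - (Fintype.card ι - 1) * μ.real C := by
        simp_rw [measureReal_sdiff (hCA _) hC (hfin _)]
        rw [sum_sub_distrib, sum_const, card_univ, nsmul_eq_mul]
        ring

theorem Icc_update_inter_Icc_update {ι β : Type*} [DecidableEq ι] [Lattice β] {a x c : ι → β}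
    (hxc : x ≤ c) {i j : ι} (hij : i ≠ j) :
    Icc a (update x i (c i)) ∩ Icc a (update x j (c j)) = Icc a x := by
  rw [Icc_inter_Icc, sup_idem]
  congr 1
  ext k
  by_cases hki : k = i
  · subst hki; simp [update_of_ne hij, hxc k]
  · by_cases hkj : k = j
    · subst hkj; simp [update_of_ne hki, hxc k]
    · simp [update_of_ne hki, update_of_ne hkj]

theorem volumeReal_Icc_zero_update {ι : Type*} [Fintype ι] [DecidableEq ι] {x : ι → ℝ}
    (hx : 0 ≤ x) (i : ι) (b : ℝ) (hb : 0 ≤ b) :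
    volume.real (Icc 0 (update x i b)) = b * ∏ j ∈ univ.erase i, x j := by
  rw [measureReal_def, Real.volume_Icc_pi_toReal
    (le_update_iff.2 ⟨hb, fun j _ ↦ hx j⟩ : (0 : ι → ℝ) ≤ update x i b)]
  simp only [Pi.zero_apply, sub_zero]
  rw [prod_update_of_mem (mem_univ i), sdiff_singleton_eq_erase]

theorem volume_setOf_forall_ne_eq_zero {ι : Type*} [Fintype ι] [Nontrivial ι] (x : ι → ℝ)
    (i : ι) : volume {y : ι → ℝ | ∀ j ≠ i, y j = x j} = 0 := by
  obtain ⟨j, hj⟩ := exists_ne i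
  refine measure_mono_null (fun y hy ↦ hy j hj) ?_
  rw [volume_pi]
  exact Measure.pi_hyperplane (fun _ : ι ↦ (volume : Measure ℝ)) j (x j)

theorem KDominates.exists_forall_ne_le {d : ℕ} {y x : Fin d → ℝ} (h : KDominates (d - 1) y x) :
    ∃ i, ∀ j ≠ i, y j ≤ x j := by
  obtain ⟨S, hS, hle, j₀, -, -⟩ := h
  have : Nonempty (Fin d) := ⟨j₀⟩
  have hcompl : #Sᶜ ≤ 1 := by rw [card_compl, Fintype.card_fin]; omega
  obtain ⟨i, hi⟩ := card_le_one_iff_subset_singleton.1 hcompl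
  refine ⟨i, fun j hj ↦ hle j ?_⟩
  by_contra hjS
  exact hj (mem_singleton.1 (hi (mem_compl.2 hjS)))

theorem kDominates_sub_one_of_forall_ne_le {d : ℕ} {y x : Fin d → ℝ} {i : Fin d}
    (hle : ∀ j ≠ i, y j ≤ x j) (hlt : ∃ j ≠ i, y j < x j) : KDominates (d - 1) y x := by
  obtain ⟨j, hji, hj⟩ := hlt
  refine ⟨univ.erase i, ?_, fun k hk ↦ hle k (ne_of_mem_erase hk), j,
    mem_erase.2 ⟨hji, mem_univ j⟩, hj⟩
  rw [card_erase_of_mem (mem_univ i), card_univ, Fintype.card_fin]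

theorem setOf_kDominates_ae_eq_iUnion_Icc {d : ℕ} [Nontrivial (Fin d)] {x : Fin d → ℝ}
    (hx : x ≤ 1) :
    {y : Fin d → ℝ | (∀ j, y j ∈ Icc (0 : ℝ) 1) ∧ KDominates (d - 1) y x} =ᵐ[volume]
      ⋃ i, Icc 0 (update x i 1) := by
  refine EventuallyLE.antisymm (LE.le.eventuallyLE ?_) (ae_le_set.2 ?_)
  · rintro y ⟨hy, hdom⟩
    obtain ⟨i, hi⟩ := hdom.exists_forall_ne_le
    exact mem_iUnion.2 ⟨i, fun j ↦ (hy j).1, le_update_iff.2 ⟨(hy i).2, hi⟩⟩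
  · refine measure_mono_null ?_ (measure_iUnion_null (volume_setOf_forall_ne_eq_zero x))
    rintro y ⟨hy, hyB⟩
    obtain ⟨i, hy0, hyx⟩ := mem_iUnion.1 hy
    obtain ⟨hyi, hle⟩ := le_update_iff.1 hyx
    have hcube : ∀ j, y j ∈ Icc (0 : ℝ) 1 := fun j ↦
      ⟨hy0 j, if hj : j = i then hj ▸ hyi else (hle j hj).trans (hx j)⟩
    refine mem_iUnion.2 ⟨i, fun j hj ↦ (hle j hj).antisymm (not_lt.1 fun hlt ↦ ?_)⟩
    exact hyB ⟨hcube, kDominates_sub_one_of_forall_ne_le hle ⟨j, hj, hlt⟩⟩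

/-- The volume of the set of points of `[0,1]^d` that `(d-1)`-dominate
`x ∈ [0,1]^d` equals `∑_ℓ ∏_{j ≠ ℓ} x_j − (d−1) ∏_j x_j`. -/
theorem volume_B_dsub1 (d : ℕ) (hd : 2 ≤ d) (x : Fin d → ℝ)
    (hx : ∀ j, x j ∈ Set.Icc (0 : ℝ) 1) :
    volume {y : Fin d → ℝ |
        (∀ j, y j ∈ Set.Icc (0 : ℝ) 1) ∧ KDominates (d - 1) y x} =
      ENNReal.ofReal
        (∑ ℓ : Fin d, ∏ j ∈ Finset.univ.erase ℓ, x j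
          - (d - 1 : ℝ) * ∏ j : Fin d, x j) := by
  have : Nontrivial (Fin d) := Fin.nontrivial_iff_two_le.2 hd
  have hx0 : 0 ≤ x := fun j ↦ (hx j).1
  have hxc : x ≤ 1 := fun j ↦ (hx j).2
  have hunion := measureReal_iUnion_of_pairwise_inter_eq (μ := volume)
    (A := fun i ↦ Icc 0 (update x i 1)) (fun _ ↦ measurableSet_Icc) measurableSet_Icc
    (fun i ↦ Icc_subset_Icc_right (le_update_self_iff.2 (hxc i)))
    (fun i j hij ↦ Icc_update_inter_Icc_update (c := 1) hxc hij) (fun _ ↦ measure_Icc_lt_top.ne)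
  rw [measure_congr (setOf_kDominates_ae_eq_iUnion_Icc hxc),
    ← ofReal_measureReal (measure_iUnion_fintype_ne_top fun _ ↦ measure_Icc_lt_top.ne), hunion,
    Fintype.card_fin, measureReal_def, Real.volume_Icc_pi_toReal hx0]
  simp only [volumeReal_Icc_zero_update hx0 _ 1 zero_le_one, one_mul, Pi.zero_apply, sub_zero]
end

section
/- For d ≥ 2, the integral over the positive orthant ℝ_+^d of exp(−y_1⋯y_d · (1/y_1 + ⋯ + 1/y_d)) dy equals Γ(1/(d−1))^d / (d−1). -/
/-!
The substitution `t_j = ∏_{ℓ ≠ j} y_ℓ` maps the open orthant bijectively onto itself, with inverse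
`y_j = (∏ t)^{1/(d-1)} / t_j`. Writing `P = ∏ y`, one has `∏ t = P^{d-1}`, and the Jacobian matrix
is `diag(P/y) (J - I) diag(1/y)`, of absolute determinant `(d-1) P^{d-2}`. Hence
`dy = (d-1)⁻¹ ∏_j t_j^{1/(d-1) - 1} dt`, and the integral splits into `d` copies of the Gamma
integral for `Γ(1/(d-1))`.
-/

open MeasureTheory Finset

noncomputable section

variable {ι : Type*} [Fintype ι]

theorem prod_pos_of_mem_pi {y : ι → ℝ} (hy : y ∈ Set.univ.pi fun _ => Set.Ioi 0) :
    0 < ∏ ℓ, y ℓ :=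
  prod_pos fun ℓ _ => hy ℓ (Set.mem_univ ℓ)

theorem setIntegral_univ_pi_prod_eq_pow (f : ℝ → ℝ) (s : Set ℝ) :
    ∫ x in Set.univ.pi fun _ : ι => s, ∏ i, f (x i) = (∫ x in s, f x) ^ Fintype.card ι := by
  rw [volume_pi, Measure.restrict_pi_pi, integral_fintype_prod_eq_pow]

variable [DecidableEq ι]

def prodErase (y : ι → ℝ) (j : ι) : ℝ := ∏ ℓ ∈ univ.erase j, y ℓ

def prodEraseDeriv (y : ι → ℝ) : (ι → ℝ) →L[ℝ] (ι → ℝ) :=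
  ContinuousLinearMap.pi fun j => ∑ i ∈ univ.erase j,
    (∏ ℓ ∈ (univ.erase j).erase i, y ℓ) • ContinuousLinearMap.proj i

theorem hasFDerivAt_prodErase (y : ι → ℝ) : HasFDerivAt prodErase (prodEraseDeriv y) y :=
  hasFDerivAt_pi.2 fun _ => HasFDerivAt.finsetProd fun i _ => hasFDerivAt_apply i y

theorem prod_prodErase (y : ι → ℝ) : ∏ j, prodErase y j = (∏ ℓ, y ℓ) ^ (Fintype.card ι - 1) :=
  calc ∏ j, ∏ ℓ ∈ univ.erase j, y ℓ = ∏ ℓ, ∏ j ∈ univ.erase ℓ, y ℓ := by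
        simp_rw [← filter_ne']
        exact prod_comm' (by simp [eq_comm])
    _ = _ := by simp [prod_pow, card_erase_of_mem]

theorem prodErase_eq_div {y : ι → ℝ} (hy : ∀ i, y i ≠ 0) (j : ι) :
    prodErase y j = (∏ ℓ, y ℓ) / y j := by
  rw [prodErase, eq_div_iff (hy j), prod_erase_mul _ _ (mem_univ j)]

theorem prod_erase_erase_eq_div {y : ι → ℝ} (hy : ∀ i, y i ≠ 0) {i j : ι} (hij : i ≠ j) :
    ∏ ℓ ∈ (univ.erase j).erase i, y ℓ = (∏ ℓ, y ℓ) / (y i * y j) := by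
  rw [eq_div_iff (mul_ne_zero (hy i) (hy j)), ← mul_assoc,
    prod_erase_mul _ _ (mem_erase.2 ⟨hij, mem_univ i⟩), prod_erase_mul _ _ (mem_univ j)]

theorem det_of_one_sub_one : (Matrix.of (fun _ _ : ι => (1 : ℝ)) - 1).det =
    (-1) ^ Fintype.card ι * (1 - Fintype.card ι) := by
  have h : Matrix.of (fun _ _ : ι => (1 : ℝ)) - 1 =
      -(1 + Matrix.replicateCol Unit (fun _ => (-1 : ℝ)) *
        Matrix.replicateRow Unit (fun _ => (1 : ℝ))) := by
    ext i j
    by_cases h : i = j <;> simp [Matrix.mul_apply, h]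
  rw [h, Matrix.det_neg, Matrix.det_one_add_replicateCol_mul_replicateRow]
  simp [dotProduct]
  ring

theorem det_prodEraseDeriv {y : ι → ℝ} (hy : ∀ i, y i ≠ 0) :
    (prodEraseDeriv y).det =
      (-1) ^ Fintype.card ι * (1 - Fintype.card ι) * (∏ ℓ, y ℓ) ^ ((Fintype.card ι : ℤ) - 2) := by
  have hP : ∏ ℓ, y ℓ ≠ 0 := prod_ne_zero_iff.2 fun i _ => hy i
  -- the Jacobian matrix is `P / (y i * y j)` off the diagonal and `0` on it
  have hM : LinearMap.toMatrix' (prodEraseDeriv y : (ι → ℝ) →ₗ[ℝ] (ι → ℝ)) =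
      Matrix.diagonal (fun i => (∏ ℓ, y ℓ) / y i) *
        ((Matrix.of fun _ _ : ι => (1 : ℝ)) - 1) * Matrix.diagonal (fun j => (y j)⁻¹) := by
    ext i j
    by_cases h : i = j
    · simp [prodEraseDeriv, LinearMap.toMatrix'_apply, Pi.single_apply, h]
    · simp [prodEraseDeriv, LinearMap.toMatrix'_apply, Pi.single_apply, h,
        prod_erase_erase_eq_div hy (Ne.symm h)]
      ring
  rw [ContinuousLinearMap.det, ← LinearMap.det_toMatrix', hM, Matrix.det_mul, Matrix.det_mul,
    Matrix.det_diagonal, Matrix.det_diagonal, det_of_one_sub_one]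
  simp only [div_eq_mul_inv, prod_mul_distrib, prod_const, prod_inv_distrib, card_univ]
  rw [zpow_sub₀ hP, zpow_natCast, zpow_ofNat]
  field_simp

theorem bijOn_prodErase (hn : 2 ≤ Fintype.card ι) :
    Set.BijOn prodErase (Set.univ.pi fun _ : ι => Set.Ioi (0 : ℝ))
      (Set.univ.pi fun _ => Set.Ioi 0) := by
  have hm : Fintype.card ι - 1 ≠ 0 := by omega
  set c : ℝ := ((Fintype.card ι - 1 : ℕ) : ℝ)⁻¹
  refine Set.InvOn.bijOn (f' := fun t j => (∏ ℓ, t ℓ) ^ c / t j) ⟨fun y hy => ?_, fun t ht => ?_⟩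
    (fun y hy j _ => Set.mem_Ioi.2 <| prod_pos fun ℓ _ => hy ℓ (Set.mem_univ ℓ))
    (fun t ht j _ => div_pos (Real.rpow_pos_of_pos (prod_pos_of_mem_pi ht) c) (ht j trivial))
  · have hy0 : ∀ i, y i ≠ 0 := fun i => (hy i trivial).ne'
    funext j
    change (∏ ℓ, prodErase y ℓ) ^ c / prodErase y j = y j
    rw [prod_prodErase, Real.pow_rpow_inv_natCast (prod_pos_of_mem_pi hy).le hm,
      prodErase_eq_div hy0, div_div_cancel₀ (prod_pos_of_mem_pi hy).ne']
  · have hQ := prod_pos_of_mem_pi ht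
    have hprod : ∏ i, (∏ ℓ, t ℓ) ^ c / t i = (∏ ℓ, t ℓ) ^ c := by
      rw [prod_div_distrib, prod_const, card_univ,
        ← Nat.sub_add_cancel (by omega : 1 ≤ Fintype.card ι), pow_succ,
        Real.rpow_inv_natCast_pow hQ.le hm, mul_div_cancel_left₀ _ hQ.ne']
    funext j
    change prodErase (fun i => (∏ ℓ, t ℓ) ^ c / t i) j = t j
    rw [prodErase_eq_div fun i => (div_pos (Real.rpow_pos_of_pos hQ c) (ht i trivial)).ne', hprod,
      div_div_cancel₀ (Real.rpow_pos_of_pos hQ c).ne']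

theorem abs_det_prodEraseDeriv {y : ι → ℝ} (hy : y ∈ Set.univ.pi fun _ => Set.Ioi 0)
    (hn : 1 ≤ Fintype.card ι) :
    |(prodEraseDeriv y).det| =
      (Fintype.card ι - 1 : ℕ) * (∏ ℓ, y ℓ) ^ ((Fintype.card ι - 1 : ℕ) - 1 : ℝ) := by
  have hP := prod_pos_of_mem_pi hy
  rw [det_prodEraseDeriv fun i => (hy i trivial).ne', abs_mul, abs_mul, abs_pow, abs_neg,
    abs_one, one_pow, one_mul, abs_of_pos (zpow_pos hP _), abs_sub_comm, ← Real.rpow_intCast]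
  push_cast [hn]
  rw [abs_of_nonneg (by simpa using hn)]
  ring_nf

theorem exp_neg_sum_prodErase_eq (hn : 2 ≤ Fintype.card ι) {y : ι → ℝ}
    (hy : y ∈ Set.univ.pi fun _ => Set.Ioi 0) :
    Real.exp (-∑ j, prodErase y j) = |(prodEraseDeriv y).det| *
      ((((Fintype.card ι - 1 : ℕ) : ℝ)⁻¹ * ∏ j, (Real.exp (-prodErase y j) *
        prodErase y j ^ (((Fintype.card ι - 1 : ℕ) : ℝ)⁻¹ - 1)))) := by
  rw [abs_det_prodEraseDeriv hy (by omega)]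
  set m := Fintype.card ι - 1
  have hm : (m : ℝ) ≠ 0 := Nat.cast_ne_zero.2 (by omega)
  have hP := prod_pos_of_mem_pi hy
  have hpow : ∏ j, prodErase y j ^ ((m : ℝ)⁻¹ - 1) = (∏ ℓ, y ℓ) ^ (1 - m : ℝ) := by
    rw [Real.finsetProd_rpow univ (prodErase y) fun j _ => (prod_pos fun ℓ _ => hy ℓ trivial).le,
      prod_prodErase, ← Real.rpow_natCast, ← Real.rpow_mul hP.le, mul_sub, mul_inv_cancel₀ hm,
      mul_one]
  rw [prod_mul_distrib, hpow, ← Real.exp_sum, sum_neg_distrib]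
  field_simp
  rw [← Real.rpow_add hP]
  simp

theorem integral_exp_neg_sum_prodErase (hn : 2 ≤ Fintype.card ι) :
    ∫ y in Set.univ.pi fun _ : ι => Set.Ioi 0, Real.exp (-∑ j, prodErase y j) =
      Real.Gamma ((Fintype.card ι - 1 : ℕ) : ℝ)⁻¹ ^ Fintype.card ι / (Fintype.card ι - 1 : ℕ) := by
  set O : Set (ι → ℝ) := Set.univ.pi fun _ => Set.Ioi 0
  set c : ℝ := ((Fintype.card ι - 1 : ℕ) : ℝ)⁻¹
  have hc : 0 < c := inv_pos.2 (Nat.cast_pos.2 (by omega))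
  have hO : MeasurableSet O := MeasurableSet.univ_pi fun _ => measurableSet_Ioi
  calc ∫ y in O, Real.exp (-∑ j, prodErase y j)
      = ∫ y in O, |(prodEraseDeriv y).det| •
          (c * ∏ j, (Real.exp (-prodErase y j) * prodErase y j ^ (c - 1))) :=
        setIntegral_congr_fun hO fun y hy => exp_neg_sum_prodErase_eq hn hy
    _ = ∫ t in prodErase '' O, c * ∏ j, (Real.exp (-t j) * t j ^ (c - 1)) :=
        (integral_image_eq_integral_abs_det_fderiv_smul volume hO
          (fun y _ => (hasFDerivAt_prodErase y).hasFDerivWithinAt) (bijOn_prodErase hn).injOn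
          fun t => c * ∏ j, (Real.exp (-t j) * t j ^ (c - 1))).symm
    _ = c * Real.Gamma c ^ Fintype.card ι := by
        rw [(bijOn_prodErase hn).image_eq, integral_const_mul,
          setIntegral_univ_pi_prod_eq_pow fun x => Real.exp (-x) * x ^ (c - 1),
          ← Real.Gamma_eq_integral hc]
    _ = _ := by rw [mul_comm, div_eq_mul_inv]

end

/-- `∫_{ℝ_+^d} exp(−y_1⋯y_d (1/y_1 + ⋯ + 1/y_d)) dy = Γ(1/(d−1))^d/(d−1)`. -/
theorem integral_phi_d (d : ℕ) (hd : 2 ≤ d) :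
    ∫ y in (Set.univ.pi fun _ : Fin d => Set.Ioi (0 : ℝ)),
        Real.exp (-(∑ j : Fin d, ∏ ℓ ∈ Finset.univ.erase j, y ℓ)) =
      Real.Gamma (1 / ((d : ℝ) - 1)) ^ d / ((d : ℝ) - 1) := by
  have hcast : ((d - 1 : ℕ) : ℝ) = (d : ℝ) - 1 := by rw [Nat.cast_sub (by omega), Nat.cast_one]
  simpa only [Fintype.card_fin, hcast, one_div, prodErase] using
    integral_exp_neg_sum_prodErase (ι := Fin d) (by simpa using hd)
end

section
/- For d ≥ 2 and every integer j ≥ 0, ∫_{ℝ_+^d} (t_1+⋯+t_d)^j exp(−(t_1+⋯+t_d)) (t_1⋯t_d)^{−(d−2)/(d−1)} dt = j! · Γ(1/(d−1))^d · binom(1/(d−1)+j, j). -/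
/-!
Expanding `(∑ tᵢ)^j` by the multinomial theorem, every monomial integrates over the orthant to a
product of one-dimensional Gamma integrals `Γ(a + kᵢ) = kᵢ! · multichoose(a, kᵢ) · Γ(a)`. The
multinomial coefficient absorbs the factorials into `j!`, and what remains,
`∑_{k₁+⋯+k_d = j} ∏ multichoose(a, kᵢ)`, is `multichoose(d a, j)` by the Chu–Vandermonde identity
for rising factorials, itself the usual one for binomial coefficients under `r ↦ -r`. For
`a = 1/(d-1)` one has `d a = a + 1` and `multichoose(a + 1, j) = binom(a + j, j)`.
-/

open MeasureTheory Finset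
open scoped Nat

namespace Ring

variable {R : Type*} [CommRing R] [BinomialRing R]

theorem multichoose_add (r s : R) (n : ℕ) :
    multichoose (r + s) n =
      ∑ ij ∈ antidiagonal n, multichoose r ij.1 * multichoose s ij.2 := by
  have h := add_choose_eq n (Commute.all (-r) (-s))
  rw [← neg_add, choose_neg'] at h
  rw [← smul_left_cancel_iff (Int.negOnePow n), h, smul_sum]
  refine sum_congr rfl fun ij hij => ?_
  rw [choose_neg', choose_neg', smul_mul_smul_comm, ← Int.negOnePow_add]
  push_cast [← mem_antidiagonal.mp hij]
  rfl

theorem multichoose_sum {ι : Type*} [DecidableEq ι] (s : Finset ι) (r : ι → R) (n : ℕ) :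
    multichoose (∑ i ∈ s, r i) n = ∑ k ∈ piAntidiag s n, ∏ i ∈ s, multichoose (r i) (k i) := by
  induction s using Finset.cons_induction generalizing n with
  | empty => cases n <;> simp
  | cons a s ha ih =>
    rw [piAntidiag_cons ha, sum_disjiUnion, sum_cons, multichoose_add]
    refine sum_congr rfl fun p _ => ?_
    rw [ih, mul_sum, sum_map]
    refine sum_congr rfl fun k hk => ?_
    have hka : k a = 0 := by_contra fun h => ha ((mem_piAntidiag.mp hk).2 a h)
    rw [prod_cons]
    congr 1
    · simp [hka]
    · refine prod_congr rfl fun i hi => ?_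
      simp [show i ≠ a from fun h => ha (h ▸ hi)]

end Ring

theorem prod_range_add_sub_eq_factorial_mul_multichoose (x : ℝ) (n : ℕ) :
    ∏ i ∈ range n, (x + n - i) = n ! * Ring.multichoose (x + 1) n := by
  rw [← descPochhammer_eval_eq_prod_range, descPochhammer_eval_eq_ascPochhammer, ← nsmul_eq_mul,
    Ring.factorial_nsmul_multichoose_eq_ascPochhammer, Polynomial.ascPochhammer_smeval_eq_eval]
  ring_nf

namespace Real

variable {a : ℝ}

theorem Gamma_add_nat_eq_ascPochhammer_mul (ha : ∀ k : ℕ, a + k ≠ 0) (n : ℕ) :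
    Gamma (a + n) = (ascPochhammer ℝ n).eval a * Gamma a := by
  induction n with
  | zero => simp
  | succ n ih =>
    rw [Nat.cast_succ, ← add_assoc, Gamma_add_one (ha n), ih, ascPochhammer_succ_eval]
    ring

theorem Gamma_add_nat_eq_factorial_mul_multichoose_mul (ha : ∀ k : ℕ, a + k ≠ 0) (n : ℕ) :
    Gamma (a + n) = n ! * Ring.multichoose a n * Gamma a := by
  rw [Gamma_add_nat_eq_ascPochhammer_mul ha, ← nsmul_eq_mul,
    Ring.factorial_nsmul_multichoose_eq_ascPochhammer, Polynomial.ascPochhammer_smeval_eq_eval]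

end Real

section PiProd

variable {ι 𝕜 : Type*} [Fintype ι] [RCLike 𝕜] {E : ι → Type*} [∀ i, MeasurableSpace (E i)]
  {μ : ∀ i, Measure (E i)} [∀ i, SigmaFinite (μ i)] {s : ∀ i, Set (E i)} {f : ∀ i, E i → 𝕜}

theorem integrableOn_univ_pi_prod (hf : ∀ i, IntegrableOn (f i) (s i) (μ i)) :
    IntegrableOn (fun x ↦ ∏ i, f i (x i)) (Set.univ.pi s) (Measure.pi μ) := by
  rw [IntegrableOn, Measure.restrict_pi_pi]
  exact .fintype_prod_dep hf

theorem setIntegral_univ_pi_prod :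
    ∫ x in Set.univ.pi s, ∏ i, f i (x i) ∂Measure.pi μ = ∏ i, ∫ x in s i, f i x ∂μ i := by
  rw [Measure.restrict_pi_pi, integral_fintype_prod_eq_prod]

end PiProd

section DirichletMoment

variable {ι : Type*} [Fintype ι]

theorem sum_pow_mul_exp_neg_sum_mul_prod_rpow [DecidableEq ι]
    (a : ι → ℝ) (j : ℕ) {t : ι → ℝ} (ht : ∀ i, 0 < t i) :
    (∑ i, t i) ^ j * Real.exp (-∑ i, t i) * ∏ i, t i ^ (a i - 1) =
      ∑ k ∈ piAntidiag univ j,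
        Nat.multinomial univ k * ∏ i, (Real.exp (-t i) * t i ^ (a i + k i - 1)) := by
  have hfactor (k : ι → ℕ) (i : ι) :
      Real.exp (-t i) * t i ^ (a i + k i - 1) = t i ^ k i * Real.exp (-t i) * t i ^ (a i - 1) := by
    rw [add_sub_right_comm, Real.rpow_add (ht i), Real.rpow_natCast]
    ring
  simp_rw [hfactor, prod_mul_distrib, ← Real.exp_sum, sum_neg_distrib, sum_pow_eq_sum_piAntidiag,
    sum_mul, mul_assoc]

theorem integral_sum_pow_mul_exp_neg_sum_mul_prod_rpow {a : ι → ℝ} (ha : ∀ i, 0 < a i) (j : ℕ) :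
    ∫ t in Set.univ.pi fun _ : ι => Set.Ioi (0 : ℝ),
        (∑ i, t i) ^ j * Real.exp (-∑ i, t i) * ∏ i, t i ^ (a i - 1) =
      j ! * (∏ i, Real.Gamma (a i)) * Ring.multichoose (∑ i, a i) j := by
  classical
  have hpos (i : ι) (n : ℕ) : 0 < a i + n := by have := ha i; positivity
  have hint (k : ι → ℕ) : IntegrableOn
      (fun t : ι → ℝ => ∏ i, Real.exp (-t i) * t i ^ (a i + k i - 1))
      (Set.univ.pi fun _ => Set.Ioi 0) :=
    integrableOn_univ_pi_prod fun i => Real.GammaIntegral_convergent (hpos i (k i))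
  rw [setIntegral_congr_fun (MeasurableSet.univ_pi fun _ => measurableSet_Ioi)
      fun t ht => sum_pow_mul_exp_neg_sum_mul_prod_rpow a j fun i => ht i (Set.mem_univ i),
    integral_finsetSum _ fun k _ => (hint k).const_mul _]
  simp_rw [Ring.multichoose_sum, mul_sum, integral_const_mul]
  refine sum_congr rfl fun k hk => ?_
  rw [volume_pi,
    setIntegral_univ_pi_prod (f := fun i x => Real.exp (-x) * x ^ (a i + k i - 1))]
  simp_rw [← Real.Gamma_eq_integral (hpos _ (k _)),
    Real.Gamma_add_nat_eq_factorial_mul_multichoose_mul fun n => (hpos _ n).ne', prod_mul_distrib]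
  rw [← (mem_piAntidiag.mp hk).1, ← Nat.multinomial_spec]
  push_cast
  ring

end DirichletMoment

/-- For `d ≥ 2` and `j ≥ 0`,
`∫_{ℝ_+^d} (∑ t_i)^j e^{−∑ t_i} (∏ t_i)^{−(d−2)/(d−1)} dt
  = j! Γ(1/(d−1))^d · binom(1/(d−1)+j, j)`,
where `binom(α,j) = (∏_{i<j} (α−i))/j!`. -/
theorem integral_moment (d j : ℕ) (hd : 2 ≤ d) :
    ∫ t in (Set.univ.pi fun _ : Fin d => Set.Ioi (0 : ℝ)),
        (∑ i : Fin d, t i) ^ j * Real.exp (-(∑ i : Fin d, t i)) *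
          (∏ i : Fin d, t i) ^ (-((d : ℝ) - 2) / ((d : ℝ) - 1)) =
      (j.factorial : ℝ) * Real.Gamma (1 / ((d : ℝ) - 1)) ^ d *
        ((∏ i ∈ Finset.range j, (1 / ((d : ℝ) - 1) + (j : ℝ) - (i : ℝ))) /
          (j.factorial : ℝ)) := by
  have hd1 : (0 : ℝ) < d - 1 := by
    have : (2 : ℝ) ≤ d := by exact_mod_cast hd
    linarith
  set a : ℝ := 1 / ((d : ℝ) - 1) with ha_def
  have ha : 0 < a := by positivity
  have hexponent : -((d : ℝ) - 2) / ((d : ℝ) - 1) = a - 1 := by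
    rw [ha_def]
    field_simp
    ring
  have hsum : ∑ _i : Fin d, a = a + 1 := by
    rw [sum_const, card_univ, Fintype.card_fin, nsmul_eq_mul, ha_def]
    field_simp
    ring
  have hintegrand : Set.EqOn
      (fun t : Fin d → ℝ => (∑ i, t i) ^ j * Real.exp (-(∑ i, t i)) * (∏ i, t i) ^ (a - 1))
      (fun t => (∑ i, t i) ^ j * Real.exp (-(∑ i, t i)) * ∏ i, t i ^ (a - 1))
      (Set.univ.pi fun _ => Set.Ioi 0) := fun t ht =>
    congrArg (_ * ·) (Real.finsetProd_rpow _ _ (fun i _ => (ht i (Set.mem_univ i)).le) _).symm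
  rw [hexponent, setIntegral_congr_fun (MeasurableSet.univ_pi fun _ => measurableSet_Ioi) hintegrand,
    integral_sum_pow_mul_exp_neg_sum_mul_prod_rpow (fun _ => ha), hsum,
    prod_range_add_sub_eq_factorial_mul_multichoose, prod_const, card_univ, Fintype.card_fin]
  field_simp
end

section
/- Let n points be drawn uniformly and independently from the simplex S_d, d ≥ 2 fixed. Then the expected number of (d−1)-dominant skyline points is O(n(1 − d^{−d})^n) and hence tends to 0 as n → ∞. -/
open MeasureTheory Finset Filter

/-- The simplex `S_d = {x : −1 ≤ x_j ≤ 0, ∑ |x_j| ≤ 1}`. -/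
def simplexSd (d : ℕ) : Set (Fin d → ℝ) :=
  {x | (∀ j, -1 ≤ x j ∧ x j ≤ 0) ∧ ∑ j : Fin d, |x j| ≤ 1}

/-!
Let `x ∈ S_d` and let `x j₀` be its smallest coordinate. Setting that coordinate to `0` gives a
point `c`, and the corner simplex `c - {u ≥ 0, ∑ u ≤ r}`, `r = 1 - ∑_{j ≠ j₀} |x j|`, lies in
`S_d`; its points are `≤ x` in every coordinate but `j₀`, so off a null hyperplane they
`(d-1)`-dominate `x`. Since `|x j₀|` is the largest term, `r ≥ 1/d`, whence
`d! |B(x)| ≥ d^{-d}`. The integrand is therefore at most `(1 - d^{-d})^{n-1}` on `S_d`, which has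
volume `1/d!`, and the expectation is at most `n (1 - d^{-d})^{n-1}`.
-/

def cornerSimplex (d : ℕ) (r : ℝ) : Set (Fin d → ℝ) :=
  {u | (∀ j, 0 ≤ u j) ∧ ∑ j, u j ≤ r}

lemma isClosed_cornerSimplex (d : ℕ) (r : ℝ) : IsClosed (cornerSimplex d r) := by
  simp only [cornerSimplex, Set.ofPred_and, Set.ofPred_forall]
  exact (isClosed_iInter fun j => isClosed_le continuous_const (continuous_apply j)).inter
    (isClosed_le (by fun_prop) continuous_const)

lemma measurableSet_cornerSimplex (d : ℕ) (r : ℝ) : MeasurableSet (cornerSimplex d r) :=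
  (isClosed_cornerSimplex d r).measurableSet

lemma le_of_mem_cornerSimplex {d : ℕ} {r : ℝ} {u : Fin d → ℝ} (hu : u ∈ cornerSimplex d r)
    (j : Fin d) : u j ≤ r :=
  (single_le_sum (fun i _ => hu.1 i) (mem_univ j)).trans hu.2

lemma add_mem_cornerSimplex {d : ℕ} {r s : ℝ} {u v : Fin d → ℝ} (hu : u ∈ cornerSimplex d r)
    (hv : v ∈ cornerSimplex d s) : u + v ∈ cornerSimplex d (r + s) := by
  refine ⟨fun j => add_nonneg (hu.1 j) (hv.1 j), ?_⟩
  simpa only [Pi.add_apply, sum_add_distrib] using add_le_add hu.2 hv.2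

lemma integral_sub_pow_div_factorial (d : ℕ) (r : ℝ) :
    ∫ a in (0 : ℝ)..r, (r - a) ^ d / d.factorial = r ^ (d + 1) / (d + 1).factorial := by
  rw [intervalIntegral.integral_div, intervalIntegral.integral_comp_sub_left (· ^ d) r,
    sub_self, sub_zero, integral_pow, Nat.factorial_succ]
  push_cast
  field_simp
  ring

lemma cornerSimplex_eq_empty {d : ℕ} {r : ℝ} (hr : r < 0) : cornerSimplex d r = ∅ :=
  Set.eq_empty_of_forall_notMem fun _ hu =>
    (sum_nonneg fun j _ => hu.1 j).not_gt (hu.2.trans_lt hr)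

lemma volume_cornerSimplex (d : ℕ) {r : ℝ} (hr : 0 ≤ r) :
    volume (cornerSimplex d r) = ENNReal.ofReal (r ^ d / d.factorial) := by
  induction d generalizing r with
  | zero =>
    have : cornerSimplex 0 r = Set.univ := by ext u; simp [cornerSimplex, hr]
    simp [this, volume_pi]
  | succ d ih =>
    set T : Set (ℝ × (Fin d → ℝ)) := {p | 0 ≤ p.1 ∧ p.2 ∈ cornerSimplex d (r - p.1)}
    have hT : MeasurableSet T := by
      simp only [T, cornerSimplex, Set.ofPred_and, Set.ofPred_forall]
      measurability
    have hpre : cornerSimplex (d + 1) r =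
        MeasurableEquiv.piFinSuccAbove (fun _ => ℝ) 0 ⁻¹' T := by
      ext x
      simp only [T, cornerSimplex, Set.mem_preimage, MeasurableEquiv.piFinSuccAbove_apply,
        Fin.insertNthEquiv_symm_apply, Set.mem_ofPred_eq, Fin.removeNth, le_sub_iff_add_le']
      rw [Fin.forall_iff_succAbove 0, Fin.sum_univ_succAbove _ 0, and_assoc]
    have hslice : ∀ a, volume (Prod.mk a ⁻¹' T) =
        (Set.Icc 0 r).indicator (fun a => ENNReal.ofReal ((r - a) ^ d / d.factorial)) a := by
      intro a
      by_cases ha : 0 ≤ a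
      · rw [show Prod.mk a ⁻¹' T = cornerSimplex d (r - a) by ext; simp [T, ha]]
        by_cases har : a ≤ r
        · rw [ih (sub_nonneg.2 har), Set.indicator_of_mem (Set.mem_Icc.2 ⟨ha, har⟩)]
        · rw [cornerSimplex_eq_empty (by linarith), Set.indicator_of_notMem (by simp [har]),
            measure_empty]
      · rw [show Prod.mk a ⁻¹' T = ∅ by ext; simp [T, ha],
          Set.indicator_of_notMem (by simp [ha]), measure_empty]
    have hnonneg : ∀ a ∈ Set.Icc 0 r, 0 ≤ (r - a) ^ d / d.factorial := fun a ha =>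
      div_nonneg (pow_nonneg (sub_nonneg.2 ha.2) _) (Nat.cast_nonneg _)
    rw [hpre, volume_pi, (measurePreserving_piFinSuccAbove _ 0).measure_preimage
      hT.nullMeasurableSet, Measure.prod_apply hT, ← volume_pi, lintegral_congr hslice,
      lintegral_indicator measurableSet_Icc, ← ofReal_integral_eq_lintegral_ofReal
        (by fun_prop : Continuous _).integrableOn_Icc
        ((ae_restrict_iff' measurableSet_Icc).2 (Eventually.of_forall hnonneg)),
      integral_Icc_eq_integral_Ioc, ← intervalIntegral.integral_of_le hr,
      integral_sub_pow_div_factorial]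

lemma simplexSd_eq_preimage_neg (d : ℕ) : simplexSd d = Neg.neg ⁻¹' cornerSimplex d 1 := by
  ext y
  simp only [simplexSd, cornerSimplex, Set.mem_preimage, Set.mem_ofPred_eq, Pi.neg_apply,
    neg_nonneg]
  constructor
  · rintro ⟨hy, hsum⟩
    exact ⟨fun j => (hy j).2, by simpa only [abs_of_nonpos (hy _).2] using hsum⟩
  · rintro ⟨hy, hsum⟩
    refine ⟨fun j => ⟨?_, hy j⟩, by simpa only [abs_of_nonpos (hy _)] using hsum⟩
    exact neg_le.1 (le_of_mem_cornerSimplex (u := -y) ⟨fun j => neg_nonneg.2 (hy j), hsum⟩ j)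

lemma measurableSet_simplexSd (d : ℕ) : MeasurableSet (simplexSd d) := by
  rw [simplexSd_eq_preimage_neg]
  exact measurable_neg (measurableSet_cornerSimplex d 1)

lemma volume_simplexSd (d : ℕ) :
    volume (simplexSd d) = ENNReal.ofReal (1 / d.factorial) := by
  rw [simplexSd_eq_preimage_neg, (Measure.measurePreserving_neg volume).measure_preimage
    (measurableSet_cornerSimplex d 1).nullMeasurableSet, volume_cornerSimplex d zero_le_one,
    one_pow]

def dominatingSet {d : ℕ} (k : ℕ) (x : Fin d → ℝ) : Set (Fin d → ℝ) :=
  {y ∈ simplexSd d | KDominates k y x}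

lemma kDominates_of_le_of_ne {d : ℕ} {p q : Fin d → ℝ} {j₀ j₁ : Fin d} (hj : j₁ ≠ j₀)
    (hle : ∀ j ≠ j₀, p j ≤ q j) (hne : p j₁ ≠ q j₁) : KDominates (d - 1) p q :=
  ⟨univ.erase j₀, by simp [card_erase_of_mem], fun j hj => hle j (ne_of_mem_erase hj),
    j₁, mem_erase.2 ⟨hj, mem_univ _⟩, lt_of_le_of_ne (hle j₁ hj) hne⟩

lemma inv_le_one_sub_sum_erase {d : ℕ} {a : Fin d → ℝ} {j₀ : Fin d} (hsum : ∑ j, a j ≤ 1)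
    (hmax : ∀ j, a j ≤ a j₀) : (d : ℝ)⁻¹ ≤ 1 - ∑ j ∈ univ.erase j₀, a j := by
  have hd : (1 : ℝ) ≤ d := by exact_mod_cast Fin.pos j₀
  have hA : ∑ j ∈ univ.erase j₀, a j ≤ (d - 1) * a j₀ := by
    have := sum_le_card_nsmul (univ.erase j₀) a (a j₀) fun j _ => hmax j
    rwa [card_erase_of_mem (mem_univ _), card_univ, Fintype.card_fin, nsmul_eq_mul,
      Nat.cast_pred (Fin.pos j₀)] at this
  rw [← add_sum_erase _ _ (mem_univ j₀)] at hsum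
  rw [inv_le_iff_one_le_mul₀ (by linarith)]
  nlinarith [mul_le_mul_of_nonneg_left hsum (sub_nonneg.2 hd)]

lemma mem_simplexSd_of_sub_mem_cornerSimplex {d : ℕ} {x y : Fin d → ℝ} {j₀ : Fin d}
    (hx : ∀ j, x j ≤ 0)
    (hy : Function.update x j₀ 0 - y ∈ cornerSimplex d (1 - ∑ j ∈ univ.erase j₀, -x j)) :
    y ∈ simplexSd d := by
  have hc : -Function.update x j₀ 0 ∈ cornerSimplex d (∑ j ∈ univ.erase j₀, -x j) := by
    refine ⟨fun j => ?_, le_of_eq ?_⟩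
    · rcases eq_or_ne j j₀ with rfl | hj
      · simp
      · simpa [Function.update_of_ne hj] using hx j
    · simp only [Pi.neg_apply]
      rw [← add_sum_erase _ _ (mem_univ j₀), Function.update_self, neg_zero, zero_add]
      exact sum_congr rfl fun j hj => by rw [Function.update_of_ne (ne_of_mem_erase hj)]
  rw [simplexSd_eq_preimage_neg, Set.mem_preimage]
  convert add_mem_cornerSimplex hy hc using 2 <;> abel

lemma le_volume_dominatingSet {d : ℕ} (hd : 2 ≤ d) {x : Fin d → ℝ} (hx : x ∈ simplexSd d) :
    ENNReal.ofReal (((d : ℝ) ^ d)⁻¹ / d.factorial) ≤ volume (dominatingSet (d - 1) x) := by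
  obtain ⟨j₀, -, hj₀⟩ := exists_min_image univ x (univ_nonempty_iff.2 ⟨⟨0, by omega⟩⟩)
  obtain ⟨j₁, hj₁⟩ := Fintype.exists_ne_of_one_lt_card (by simp; omega) j₀
  have hnegx : -x ∈ cornerSimplex d 1 := by rwa [simplexSd_eq_preimage_neg] at hx
  set r := 1 - ∑ j ∈ univ.erase j₀, -x j
  have hr : (d : ℝ)⁻¹ ≤ r :=
    inv_le_one_sub_sum_erase hnegx.2 fun j => neg_le_neg (hj₀ j (mem_univ j))
  set K := (Function.update x j₀ 0 - ·) ⁻¹' cornerSimplex d r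
  have hK : volume K = ENNReal.ofReal (r ^ d / d.factorial) := by
    rw [(Measure.measurePreserving_sub_left volume _).measure_preimage
      (measurableSet_cornerSimplex d r).nullMeasurableSet,
      volume_cornerSimplex d ((inv_nonneg.2 d.cast_nonneg).trans hr)]
  have hnull : volume {y : Fin d → ℝ | y j₁ = x j₁} = 0 := by
    rw [volume_pi]
    exact Measure.pi_hyperplane _ j₁ _
  have hsub : K \ {y | y j₁ = x j₁} ⊆ dominatingSet (d - 1) x := by
    rintro y ⟨hyK, hy₁⟩
    refine ⟨mem_simplexSd_of_sub_mem_cornerSimplex (fun j => (hx.1 j).2) hyK,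
      kDominates_of_le_of_ne hj₁ (fun j hj => ?_) hy₁⟩
    simpa [Function.update_of_ne hj] using hyK.1 j
  calc ENNReal.ofReal (((d : ℝ) ^ d)⁻¹ / d.factorial)
      ≤ ENNReal.ofReal (r ^ d / d.factorial) := by
        rw [← inv_pow]
        gcongr
    _ = volume (K \ {y | y j₁ = x j₁}) := by rw [measure_sdiff_null hnull, hK]
    _ ≤ volume (dominatingSet (d - 1) x) := measure_mono hsub

lemma factorial_mul_volume_dominatingSet_le_one {d : ℕ} (k : ℕ) (x : Fin d → ℝ) :
    (d.factorial : ℝ) * (volume (dominatingSet k x)).toReal ≤ 1 := by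
  rw [← le_div_iff₀' (by positivity)]
  exact ENNReal.toReal_le_of_le_ofReal (by positivity)
    (volume_simplexSd d ▸ measure_mono (Set.sep_subset _ _))

lemma inv_pow_le_factorial_mul_volume_dominatingSet {d : ℕ} (hd : 2 ≤ d) {x : Fin d → ℝ}
    (hx : x ∈ simplexSd d) :
    ((d : ℝ) ^ d)⁻¹ ≤ d.factorial * (volume (dominatingSet (d - 1) x)).toReal := by
  rw [← div_le_iff₀' (by positivity)]
  exact (ENNReal.ofReal_le_iff_le_toReal (measure_ne_top_of_subset (Set.sep_subset _ _)
    (volume_simplexSd d ▸ ENNReal.ofReal_ne_top))).1 (le_volume_dominatingSet hd hx)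

noncomputable def expectedSkylineCount (d n : ℕ) : ℝ :=
  n * d.factorial *
    ∫ x in simplexSd d, (1 - d.factorial * (volume (dominatingSet (d - 1) x)).toReal) ^ (n - 1)

lemma expectedSkylineCount_nonneg (d n : ℕ) : 0 ≤ expectedSkylineCount d n :=
  mul_nonneg (by positivity) <| setIntegral_nonneg (measurableSet_simplexSd d) fun x _ =>
    pow_nonneg (sub_nonneg.2 (factorial_mul_volume_dominatingSet_le_one _ x)) _

lemma expectedSkylineCount_le {d : ℕ} (hd : 2 ≤ d) (n : ℕ) :
    expectedSkylineCount d n ≤ n * (1 - ((d : ℝ) ^ d)⁻¹) ^ (n - 1) := by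
  set q : ℝ := 1 - ((d : ℝ) ^ d)⁻¹
  have hI : ∫ x in simplexSd d,
      (1 - d.factorial * (volume (dominatingSet (d - 1) x)).toReal) ^ (n - 1) ≤
        q ^ (n - 1) * (1 / d.factorial) := by
    refine (Real.le_norm_self _).trans ((norm_setIntegral_le_of_norm_le_const (C := q ^ (n - 1))
      (volume_simplexSd d ▸ ENNReal.ofReal_lt_top) fun x hx => ?_).trans_eq ?_)
    · have h0 := sub_nonneg.2 (factorial_mul_volume_dominatingSet_le_one (d - 1) x)
      have hq := sub_le_sub_left (inv_pow_le_factorial_mul_volume_dominatingSet hd hx) 1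
      rw [Real.norm_eq_abs, abs_pow, abs_of_nonneg h0]
      exact pow_le_pow_left₀ h0 hq _
    · rw [measureReal_def, volume_simplexSd, ENNReal.toReal_ofReal (by positivity)]
  calc expectedSkylineCount d n ≤ n * d.factorial * (q ^ (n - 1) * (1 / d.factorial)) := by
        unfold expectedSkylineCount
        gcongr
    _ = n * q ^ (n - 1) := by field_simp

/-- The expected number of `(d−1)`-dominant skyline points of `n` uniform points
in the simplex, `n d! ∫_{S_d} (1 − d!|B^{[s]}_{d−1}(x)|)^{n−1} dx`, is
`O(n (1 − d^{−d})^n)` and tends to `0` as `n → ∞`. -/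
theorem expected_simplex_dominant_vanishes (d : ℕ) (hd : 2 ≤ d) :
    (∃ C : ℝ, 0 < C ∧ ∀ n : ℕ, 1 ≤ n →
        (n : ℝ) * (d.factorial : ℝ) *
            ∫ x in simplexSd d,
              (1 - (d.factorial : ℝ) *
                  (volume {y ∈ simplexSd d | KDominates (d - 1) y x}).toReal) ^ (n - 1)
          ≤ C * n * (1 - ((d : ℝ) ^ d)⁻¹) ^ n) ∧
      Tendsto (fun n : ℕ =>
          (n : ℝ) * (d.factorial : ℝ) *
            ∫ x in simplexSd d,
              (1 - (d.factorial : ℝ) *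
                  (volume {y ∈ simplexSd d | KDominates (d - 1) y x}).toReal) ^ (n - 1))
        atTop (nhds 0) := by
  set q : ℝ := 1 - ((d : ℝ) ^ d)⁻¹
  have hq₀ : 0 < q := sub_pos.2 (inv_lt_one_of_one_lt₀ (one_lt_pow₀ (by norm_cast) (by omega)))
  have hq₁ : q < 1 := sub_lt_self _ (by positivity)
  have hbound : ∀ n : ℕ, 1 ≤ n → expectedSkylineCount d n ≤ q⁻¹ * n * q ^ n := fun n hn => by
    obtain ⟨k, rfl⟩ := Nat.exists_eq_add_of_le' hn
    calc expectedSkylineCount d (k + 1) ≤ (k + 1 : ℕ) * q ^ (k + 1 - 1) :=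
          expectedSkylineCount_le hd _
      _ = q⁻¹ * (k + 1 : ℕ) * q ^ (k + 1) := by
          rw [Nat.add_sub_cancel, pow_succ]
          field_simp
  refine ⟨⟨q⁻¹, inv_pos.2 hq₀, hbound⟩, ?_⟩
  have hlim : Tendsto (fun n : ℕ => q⁻¹ * n * q ^ n) atTop (nhds 0) := by
    simpa [mul_assoc] using (tendsto_self_mul_const_pow_of_lt_one hq₀.le hq₁).const_mul q⁻¹
  exact tendsto_of_tendsto_of_tendsto_of_le_of_le' tendsto_const_nhds hlim
    (.of_forall (expectedSkylineCount_nonneg d)) (eventually_atTop.2 ⟨1, hbound⟩)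
end

section
/- Let n points be drawn uniformly and independently from the finite product space P = ∏_{j=1}^d {1,…,u_j} with each u_j ≥ 2, and let M be the number of k-dominant skyline points (1 ≤ k ≤ d). Then E[M]/n → 1/u as n → ∞, where u = ∏ u_j. -/
open Finset Filter Classical

noncomputable section
open scoped Classical

/-- `p` k-dominates `q` in the categorical product space. -/
def KDominatesCat {d : ℕ} {u : Fin d → ℕ} (k : ℕ)
    (p q : (j : Fin d) → Fin (u j)) : Prop :=
  ∃ S : Finset (Fin d), k ≤ S.card ∧ (∀ j ∈ S, (p j : ℕ) ≤ (q j : ℕ)) ∧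
    ∃ j ∈ S, (p j : ℕ) < (q j : ℕ)

/-!
The zero corner of `P` is k-dominated by no point, while every other point `x` is k-dominated
by the point obtained from `x` by lowering one nonzero coordinate by one. Hence the summand of
`x` is `1` for the corner and `r ^ (n - 1)` with `|r| < 1` otherwise, so `E[M]/n = u⁻¹ ∑ₓ …`
tends to `u⁻¹`.
-/

open Topology

theorem tendsto_sum_pow_of_eq_one_of_abs_lt_one {α : Type*} [Fintype α] [DecidableEq α]
    (r : α → ℝ) (x₀ : α) (h₀ : r x₀ = 1) (hr : ∀ x ≠ x₀, |r x| < 1) :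
    Tendsto (fun n : ℕ => ∑ x, r x ^ n) atTop (𝓝 1) := by
  have hlim : Tendsto (fun n : ℕ => ∑ x, r x ^ n) atTop
      (𝓝 (∑ x, if x = x₀ then (1 : ℝ) else 0)) := by
    refine tendsto_finsetSum _ fun x _ => ?_
    by_cases hx : x = x₀
    · subst hx
      rw [if_pos rfl, h₀]
      exact tendsto_const_nhds.congr fun n => (one_pow n).symm
    · simpa [hx] using tendsto_pow_atTop_nhds_zero_of_abs_lt_one (hr x hx)
  simpa using hlim

theorem abs_one_sub_card_div_lt_one {α : Type*} [Fintype α] {s : Finset α} (hs : s.Nonempty) :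
    |1 - (#s : ℝ) / Fintype.card α| < 1 := by
  have hs0 : (0 : ℝ) < #s := by exact_mod_cast hs.card_pos
  have hsα : (#s : ℝ) ≤ Fintype.card α := by exact_mod_cast s.card_le_univ
  have hpos : 0 < (#s : ℝ) / Fintype.card α := div_pos hs0 (hs0.trans_le hsα)
  have hle : (#s : ℝ) / Fintype.card α ≤ 1 := div_le_one_of_le₀ hsα (by positivity)
  rw [abs_lt]
  constructor <;> linarith

theorem exists_kDominatesCat_iff {d k : ℕ} {u : Fin d → ℕ} (hkd : k ≤ d)
    (x : (j : Fin d) → Fin (u j)) : (∃ p, KDominatesCat k p x) ↔ ∃ j, (x j : ℕ) ≠ 0 := by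
  constructor
  · rintro ⟨p, S, -, -, j, -, hlt⟩
    exact ⟨j, by omega⟩
  · rintro ⟨j, hj⟩
    let p := Function.update x j ⟨x j - 1, by omega⟩
    refine ⟨p, univ, by simpa using hkd, fun i _ => ?_, j, mem_univ j, ?_⟩
    · by_cases hi : i = j
      · subst hi
        simp [p]
      · simp [p, hi]
    · simp only [p, Function.update_self]
      omega

theorem expected_categorical_limit_general (d k : ℕ)
    (hkd : k ≤ d) (u : Fin d → ℕ) (hu : ∀ j, 2 ≤ u j) :
    Tendsto (fun n : ℕ =>
        ((n : ℝ) / (∏ j : Fin d, (u j : ℝ)) *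
            ∑ x : (j : Fin d) → Fin (u j),
              (1 - ((Finset.univ.filter
                    (fun p : (j : Fin d) → Fin (u j) => KDominatesCat k p x)).card : ℝ) /
                  (∏ j : Fin d, (u j : ℝ))) ^ (n - 1)) / (n : ℝ))
      atTop (nhds (1 / ∏ j : Fin d, (u j : ℝ))) := by
  set U : ℝ := ∏ j : Fin d, (u j : ℝ)
  have hcard : (Fintype.card ((j : Fin d) → Fin (u j)) : ℝ) = U := by
    simp [U, Fintype.card_pi]
  let x₀ : (j : Fin d) → Fin (u j) := fun j => ⟨0, by linarith [hu j]⟩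
  have hx₀ : univ.filter (fun p => KDominatesCat k p x₀) = ∅ := by
    simpa [filter_eq_empty_iff] using (exists_kDominatesCat_iff hkd x₀).not.mpr (by simp [x₀])
  have hsum := tendsto_sum_pow_of_eq_one_of_abs_lt_one
    (fun x => 1 - (#(univ.filter fun p => KDominatesCat k p x) : ℝ) / U) x₀ (by simp [hx₀])
    (fun x hx => by
      obtain ⟨p, hp⟩ := (exists_kDominatesCat_iff hkd x).mpr <| by
        by_contra! h
        exact hx (funext fun j => Fin.ext (h j))
      rw [← hcard]
      exact abs_one_sub_card_div_lt_one ⟨p, mem_filter.mpr ⟨mem_univ p, hp⟩⟩)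
  refine ((hsum.comp (tendsto_sub_atTop_nat 1)).div_const U).congr' ?_
  filter_upwards [eventually_ge_atTop 1] with n hn
  have : (n : ℝ) ≠ 0 := by positivity
  simp only [Function.comp_apply]
  field_simp

/-- Categorical model: for `n` uniform i.i.d. points in `P = ∏_j {1,…,u_j}`
with each `u_j ≥ 2` and `1 ≤ k ≤ d`, the expected number of `k`-dominant
skyline points, `E[M] = (n/u) ∑_{x∈P} (1 − |B_k(x)|/u)^{n−1}`, satisfies
`E[M]/n → 1/u` where `u = ∏ u_j`. -/
theorem expected_categorical_limit (d k : ℕ) (hd : 2 ≤ d) (hk1 : 1 ≤ k)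
    (hkd : k ≤ d) (u : Fin d → ℕ) (hu : ∀ j, 2 ≤ u j) :
    Tendsto (fun n : ℕ =>
        ((n : ℝ) / (∏ j : Fin d, (u j : ℝ)) *
            ∑ x : (j : Fin d) → Fin (u j),
              (1 - ((Finset.univ.filter
                    (fun p : (j : Fin d) → Fin (u j) => KDominatesCat k p x)).card : ℝ) /
                  (∏ j : Fin d, (u j : ℝ))) ^ (n - 1)) / (n : ℝ))
      atTop (nhds (1 / ∏ j : Fin d, (u j : ℝ))) :=
  expected_categorical_limit_general d k hkd u hu
end
end

section
/- In the categorical model with n points drawn uniformly and independently from P = ∏_{j=1}^d {1,…,u_j} (u_j ≥ 2), let M_n be the number of k-dominant skyline points and X_n the number of sample points equal to (1,…,1). Then X_n is Binomial(n, 1/u) with u = ∏ u_j, and P(M_n ≠ X_n) ≤ (1 − 1/u)^n; hence M_n is asymptotically Binomial(n, 1/u) in total variation. -/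
open Finset MeasureTheory
open scoped Classical

noncomputable section

theorem choose_mul_pow_mul_pow_div_pow {m : ℝ} (hm : m ≠ 0) (a : ℝ) (N ℓ : ℕ) :
    N.choose ℓ * a ^ ℓ * (m - a) ^ (N - ℓ) / m ^ N =
      N.choose ℓ * (a / m) ^ ℓ * (1 - a / m) ^ (N - ℓ) := by
  rcases le_or_gt ℓ N with hℓ | hℓ
  · rw [one_sub_div hm, div_pow, div_pow, ← Nat.add_sub_cancel' hℓ, pow_add,
      Nat.add_sub_cancel_left]
    field_simp
  · simp [Nat.choose_eq_zero_of_lt hℓ]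

section Binomial

variable {ι P : Type*} [Fintype ι] [DecidableEq ι] [Fintype P] (p : P → Prop) [DecidablePred p]

theorem filter_filter_eq_piFinset (S : Finset ι) :
    ({ω | ({i | p (ω i)} : Finset ι) = S} : Finset (ι → P)) =
      Fintype.piFinset fun i =>
        if i ∈ S then ({x | p x} : Finset P) else ({x | ¬p x} : Finset P) := by
  ext ω
  simp only [mem_filter, mem_univ, true_and, Fintype.mem_piFinset, Finset.ext_iff]
  refine forall_congr' fun i => ?_
  by_cases hi : i ∈ S <;> simp [hi]

theorem card_filter_filter_eq (S : Finset ι) :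
    #{ω : ι → P | ({i | p (ω i)} : Finset ι) = S} =
      #{x | p x} ^ #S * #{x | ¬p x} ^ (Fintype.card ι - #S) := by
  simp only [filter_filter_eq_piFinset, Fintype.card_piFinset, apply_ite card]
  rw [prod_ite, prod_const, prod_const, filter_mem_eq_of_subset S.subset_univ,
    filter_notMem_eq_sdiff, card_sdiff_of_subset S.subset_univ, card_univ]

theorem card_filter_card_filter_eq (ℓ : ℕ) :
    #{ω : ι → P | #{i | p (ω i)} = ℓ} =
      (Fintype.card ι).choose ℓ * #{x | p x} ^ ℓ * #{x | ¬p x} ^ (Fintype.card ι - ℓ) := by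
  have hmaps : ∀ ω ∈ ({ω : ι → P | #{i | p (ω i)} = ℓ} : Finset _),
      ({i | p (ω i)} : Finset ι) ∈ powersetCard ℓ univ :=
    fun ω hω => mem_powersetCard.2 ⟨subset_univ _, (mem_filter.1 hω).2⟩
  have hfiber : ∀ S ∈ powersetCard ℓ (univ : Finset ι),
      #{ω ∈ ({ω : ι → P | #{i | p (ω i)} = ℓ} : Finset _) |
        ({i | p (ω i)} : Finset ι) = S} =
        #{x | p x} ^ ℓ * #{x | ¬p x} ^ (Fintype.card ι - ℓ) := by
    intro S hS
    rw [← (mem_powersetCard.1 hS).2, ← card_filter_filter_eq, filter_filter]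
    congr 1
    exact filter_congr fun ω _ => and_iff_right_of_imp fun h => h ▸ rfl
  rw [card_eq_sum_card_fiberwise hmaps, sum_congr rfl hfiber, sum_const, card_powersetCard,
    card_univ, smul_eq_mul, mul_assoc]

variable [Nonempty P] [MeasurableSpace (ι → P)] [MeasurableSingletonClass (ι → P)]

theorem uniformOfFintype_toMeasure_card_filter_eq (ℓ : ℕ) :
    (PMF.uniformOfFintype (ι → P)).toMeasure {ω | #{i | p (ω i)} = ℓ} =
      ENNReal.ofReal ((Fintype.card ι).choose ℓ * (#{x | p x} / Fintype.card P : ℝ) ^ ℓ *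
        (1 - #{x | p x} / Fintype.card P : ℝ) ^ (Fintype.card ι - ℓ)) := by
  have hset : {ω : ι → P | #{i | p (ω i)} = ℓ} =
      ↑({ω | #{i | p (ω i)} = ℓ} : Finset (ι → P)) := by
    simp
  have hcompl : (Fintype.card P : ℝ) - #{x | p x} = #{x | ¬p x} := by
    rw [sub_eq_iff_eq_add', ← card_univ]
    exact_mod_cast (card_filter_add_card_filter_not p).symm
  rw [hset, PMF.toMeasure_uniformOfFintype_apply _ (Set.toFinite _).measurableSet]
  simp only [Finset.coe_sort_coe, Fintype.card_coe]
  rw [card_filter_card_filter_eq, Fintype.card_fun,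
    ← choose_mul_pow_mul_pow_div_pow (Nat.cast_ne_zero.2 Fintype.card_ne_zero), hcompl,
    ENNReal.ofReal_div_of_pos (by positivity)]
  norm_cast

end Binomial

section Skyline

variable {d : ℕ} {u : Fin d → ℕ} {k : ℕ}

theorem kDominatesCat_of_forall_eq_zero (hkd : k ≤ d) {p q : (j : Fin d) → Fin (u j)}
    (hp : ∀ j, (p j : ℕ) = 0) (hq : ¬∀ j, (q j : ℕ) = 0) : KDominatesCat k p q := by
  obtain ⟨j, hj⟩ := not_forall.1 hq
  refine ⟨univ, by simpa using hkd, fun j _ => by simp [hp j], j, mem_univ j, ?_⟩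
  rw [hp j]
  exact Nat.pos_of_ne_zero hj

theorem not_kDominatesCat_of_forall_eq_zero {p q : (j : Fin d) → Fin (u j)}
    (hq : ∀ j, (q j : ℕ) = 0) : ¬KDominatesCat k p q := by
  rintro ⟨S, -, -, j, -, hlt⟩
  rw [hq j] at hlt
  exact Nat.not_lt_zero _ hlt

variable {ι : Type*} [Fintype ι]

theorem kDominantSkyline_eq_filter_forall_eq_zero (hkd : k ≤ d)
    {ω : ι → (j : Fin d) → Fin (u j)} {i₀ : ι} (hi₀ : ∀ j, (ω i₀ j : ℕ) = 0) :
    ({i | ¬∃ i', i' ≠ i ∧ KDominatesCat k (ω i') (ω i)} : Finset ι) =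
      ({i | ∀ j, (ω i j : ℕ) = 0} : Finset ι) := by
  refine filter_congr fun (i : ι) _ => ⟨fun hsky => ?_, fun hi => ?_⟩
  · by_contra hi
    exact hsky ⟨i₀, fun h => hi (h ▸ hi₀), kDominatesCat_of_forall_eq_zero hkd hi₀ hi⟩
  · rintro ⟨i', -, hdom⟩
    exact not_kDominatesCat_of_forall_eq_zero hi hdom

end Skyline

/-- Categorical model: with `n` uniform i.i.d. points in `P = ∏_j {1,…,u_j}`
(`u_j ≥ 2`), let `M` be the number of `k`-dominant skyline points and `X` the
number of sample points equal to the minimal point `(1,…,1)`. Then `X` is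
binomially distributed with parameters `n` and `1/u`, and
`P(M ≠ X) ≤ (1 − 1/u)^n`, where `u = ∏ u_j`. -/
theorem categorical_asymptotically_binomial (d k n : ℕ)
    (hkd : k ≤ d) (u : Fin d → ℕ) (hu : ∀ j, 2 ≤ u j) :
    ∀ μ : Measure (Fin n → (j : Fin d) → Fin (u j)),
      μ = (letI : Nonempty ((j : Fin d) → Fin (u j)) :=
              ⟨fun j => ⟨0, by have := hu j; omega⟩⟩;
            (PMF.uniformOfFintype (Fin n → (j : Fin d) → Fin (u j))).toMeasure) →
      (∀ ℓ : ℕ,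
          μ {ω | (Finset.univ.filter
                (fun i : Fin n => ∀ j, (ω i j : ℕ) = 0)).card = ℓ} =
            ENNReal.ofReal ((n.choose ℓ : ℝ) *
              (1 / ∏ j : Fin d, (u j : ℝ)) ^ ℓ *
              (1 - 1 / ∏ j : Fin d, (u j : ℝ)) ^ (n - ℓ))) ∧
      μ {ω | (Finset.univ.filter
            (fun i : Fin n => ¬∃ i' : Fin n, i' ≠ i ∧
                KDominatesCat k (ω i') (ω i))).card ≠
          (Finset.univ.filter (fun i : Fin n => ∀ j, (ω i j : ℕ) = 0)).card} ≤
        ENNReal.ofReal ((1 - 1 / ∏ j : Fin d, (u j : ℝ)) ^ n) := by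
  rintro μ rfl
  let minimum : (j : Fin d) → Fin (u j) := fun j => ⟨0, by have := hu j; omega⟩
  have : Nonempty ((j : Fin d) → Fin (u j)) := ⟨minimum⟩
  have hmin : #{q : (j : Fin d) → Fin (u j) | ∀ j, (q j : ℕ) = 0} = 1 := by
    refine card_eq_one.2 ⟨minimum, ?_⟩
    ext q
    simp only [mem_filter, mem_univ, true_and, mem_singleton, funext_iff, Fin.ext_iff,
      minimum]
  have hcard : (Fintype.card ((j : Fin d) → Fin (u j)) : ℝ) = ∏ j, (u j : ℝ) := by
    simp only [Fintype.card_pi, Fintype.card_fin, Nat.cast_prod]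
  have binomial (ℓ : ℕ) := uniformOfFintype_toMeasure_card_filter_eq (ι := Fin n)
    (fun q : (j : Fin d) → Fin (u j) => ∀ j, (q j : ℕ) = 0) ℓ
  rw [hmin, hcard, Fintype.card_fin, Nat.cast_one] at binomial
  refine ⟨binomial, ?_⟩
  refine (measure_mono fun ω (hω : _ ≠ _) => ?_).trans ((binomial 0).trans_le (by simp))
  by_contra hmin_absent
  obtain ⟨i, hi⟩ := card_pos.1 (Nat.pos_of_ne_zero hmin_absent)
  have hskyline := kDominantSkyline_eq_filter_forall_eq_zero hkd (mem_filter.1 hi).2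
  -- `convert` bridges the different decidability instances of the two filters
  exact hω (by convert congrArg card hskyline)
end
end

section
/- For n points drawn uniformly and independently from [0,1]^d and 1 ≤ k ≤ d−1, the expected number of k-dominant skyline points satisfies E[M_{d,k}(n)] ≥ n · β_{d,k} ∫_{β_{d,k}}^1 t^{−2} (1−t)^{n−1} dt, where β_{d,k} = 2^{−d} ∑_{j=0}^{d−k} binom(d,j). -/
/-!
A point `y` of the cube that `k`-dominates `x` exceeds `x` in at most `d - k` coordinates,
so `B_k(x)` is covered by the boxes `∏_{j ∈ U} (x_j, 1] × ∏_{j ∉ U} [0, x_j]`, `|U| ≤ d - k`.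
The volume `∏_{j ∈ U} (1 - x_j) ∏_{j ∉ U} x_j` of such a box has mean `2^{-d}` over the cube,
hence `∫ |B_k(x)| dx ≤ β_{d,k}`. Jensen's inequality for `s ↦ s^{n-1}` then gives
`∫ (1 - |B_k(x)|)^{n-1} dx ≥ (1 - β_{d,k})^{n-1}`, and this dominates
`β ∫_β^1 t^{-2} (1 - t)^{n-1} dt`, since `(1 - t)^{n-1} ≤ (1 - β)^{n-1}` on `[β, 1]` and
`β ∫_β^1 t^{-2} dt = 1 - β`.
-/

open MeasureTheory Finset intervalIntegral

open Set

lemma card_filter_card_le_eq_sum_choose (α : Type*) [Fintype α] (m : ℕ) :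
    #{U : Finset α | U.card ≤ m} = ∑ j ∈ range (m + 1), (Fintype.card α).choose j := by
  rw [card_eq_sum_card_fiberwise (f := Finset.card) (t := range (m + 1))
    fun U hU => by simpa [Nat.lt_succ_iff] using hU]
  refine sum_congr rfl fun j hj => ?_
  rw [← card_univ, ← card_powersetCard]
  congr 1
  ext U
  simp only [mem_filter, mem_powersetCard_univ, and_iff_right_iff_imp]
  rintro rfl
  simpa [Nat.lt_succ_iff] using hj

lemma mul_integral_inv_sq_mul_one_sub_pow_le {b : ℝ} (hb0 : 0 < b) (hb1 : b ≤ 1) (N : ℕ) :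
    b * ∫ t in b..1, t⁻¹ ^ 2 * (1 - t) ^ N ≤ (1 - b) ^ N := by
  have hzero : (0 : ℝ) ∉ uIcc b 1 := by
    rw [uIcc_of_le hb1]
    exact fun h => (h.1.trans_lt' hb0).false
  have hcont : ContinuousOn (fun t : ℝ => t⁻¹ ^ 2) (uIcc b 1) :=
    (continuousOn_inv₀.mono fun t ht => ne_of_mem_of_not_mem ht hzero).pow 2
  have hinv_sq : ∫ t in b..1, t⁻¹ ^ 2 = b⁻¹ - 1 := by
    have := integral_zpow (a := b) (b := 1) (n := -2) (Or.inr ⟨by norm_num, hzero⟩)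
    norm_num at this
    simp only [inv_pow] at this ⊢
    rw [this]
    ring
  calc b * ∫ t in b..1, t⁻¹ ^ 2 * (1 - t) ^ N
      ≤ b * ∫ t in b..1, t⁻¹ ^ 2 * (1 - b) ^ N := by
        gcongr
        refine integral_mono_on hb1 ?_ ?_ fun t ht => ?_
        · exact (hcont.mul (by fun_prop)).intervalIntegrable
        · exact (hcont.mul continuousOn_const).intervalIntegrable
        · gcongr
          · linarith [ht.2]
          · exact ht.1
    _ = (1 - b) ^ (N + 1) := by
        rw [intervalIntegral.integral_mul_const, hinv_sq]
        field_simp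
        ring
    _ ≤ (1 - b) ^ N := pow_le_pow_of_le_one (by linarith) (by linarith) N.le_succ

lemma one_sub_pow_le_integral_one_sub_pow {α : Type*} [MeasurableSpace α] {μ : Measure α}
    [IsProbabilityMeasure μ] {f : α → ℝ} {b : ℝ} (hf : AEStronglyMeasurable f μ)
    (hf0 : ∀ᵐ x ∂μ, 0 ≤ f x) (hf1 : ∀ᵐ x ∂μ, f x ≤ 1) (hfb : ∫ x, f x ∂μ ≤ b) (hb : b ≤ 1)
    (N : ℕ) : (1 - b) ^ N ≤ ∫ x, (1 - f x) ^ N ∂μ := by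
  have hf_int : Integrable f μ := .of_bound hf 1 <| by
    filter_upwards [hf0, hf1] with x h0 h1
    rwa [Real.norm_eq_abs, abs_of_nonneg h0]
  have hg_int : Integrable (fun x => 1 - f x) μ := (integrable_const 1).sub hf_int
  have hg_nonneg : ∀ᵐ x ∂μ, 0 ≤ 1 - f x := hf1.mono fun x hx => sub_nonneg.2 hx
  have hgN_int : Integrable (fun x => (1 - f x) ^ N) μ :=
    .of_bound (hg_int.aestronglyMeasurable.pow N) 1 <| by
      filter_upwards [hf0, hg_nonneg] with x h0 hg
      rw [norm_pow, Real.norm_eq_abs, abs_of_nonneg hg]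
      exact pow_le_one₀ hg (by linarith)
  have jensen : (∫ x, (1 - f x) ∂μ) ^ N ≤ ∫ x, (1 - f x) ^ N ∂μ :=
    (convexOn_pow N).map_integral_le (continuous_pow N).continuousOn isClosed_Ici hg_nonneg
      hg_int hgN_int
  rw [integral_sub (integrable_const 1) hf_int, MeasureTheory.integral_const, probReal_univ,
    one_smul] at jensen
  exact (pow_le_pow_left₀ (by linarith) (by linarith) N).trans jensen

section KDominance

variable {d : ℕ}

abbrev unitCube (d : ℕ) : Set (Fin d → ℝ) := univ.pi fun _ => Icc 0 1

lemma volume_unitCube : volume (unitCube d) = 1 := by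
  rw [volume_pi_pi]
  simp

instance : IsProbabilityMeasure (volume.restrict (unitCube d)) :=
  ⟨by rw [Measure.restrict_apply_univ, volume_unitCube]⟩

def kDominatingSet (k : ℕ) (x : Fin d → ℝ) : Set (Fin d → ℝ) :=
  {y | (∀ j, y j ∈ Icc (0 : ℝ) 1) ∧ KDominates k y x}

lemma measurable_volume_kDominatingSet (k : ℕ) :
    Measurable fun x : Fin d → ℝ => volume (kDominatingSet k x) := by
  have : MeasurableSet {p : (Fin d → ℝ) × (Fin d → ℝ) |
      (∀ j, p.2 j ∈ Icc (0 : ℝ) 1) ∧ KDominates k p.2 p.1} := by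
    unfold KDominates
    exact Measurable.setOf (by fun_prop (disch := exact measurableSet_Icc))
  exact measurable_measure_prodMk_left this

lemma measureReal_kDominatingSet_le_one (k : ℕ) (x : Fin d → ℝ) :
    volume.real (kDominatingSet k x) ≤ 1 := by
  have hsub : kDominatingSet k x ⊆ unitCube d := fun _ hy j _ => hy.1 j
  refine (measureReal_mono hsub (by rw [volume_unitCube]; exact ENNReal.one_ne_top)).trans_eq ?_
  rw [measureReal_def, volume_unitCube, ENNReal.toReal_one]

/-- The sets of coordinates on which a point `k`-dominating `x` may exceed `x`. -/
def exceedanceSets (d k : ℕ) : Finset (Finset (Fin d)) := {U | U.card ≤ d - k}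

def cornerBox (x : Fin d → ℝ) (U : Finset (Fin d)) : Set (Fin d → ℝ) :=
  univ.pi fun j => if j ∈ U then Ioc (x j) 1 else Icc 0 (x j)

noncomputable def cornerVolume (x : Fin d → ℝ) (U : Finset (Fin d)) : ℝ :=
  ∏ j, if j ∈ U then 1 - x j else x j

lemma kDominatingSet_subset_biUnion_cornerBox (k : ℕ) (x : Fin d → ℝ) :
    kDominatingSet k x ⊆ ⋃ U ∈ exceedanceSets d k, cornerBox x U := by
  rintro y ⟨hy, S, hkS, hle, -⟩
  set U : Finset (Fin d) := {j | x j < y j}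
  have hUS : Disjoint U S := disjoint_left.2 fun j hjU hjS =>
    (hle j hjS).not_gt (mem_filter.1 hjU).2
  have hcard : U.card ≤ d - k := by
    have := card_union_of_disjoint hUS ▸ card_le_univ (U ∪ S)
    rw [Fintype.card_fin] at this
    omega
  refine Set.mem_biUnion (x := U) ((mem_filter_univ U).2 hcard) fun j _ => ?_
  by_cases hj : x j < y j
  · simp [U, hj, (hy j).2]
  · simp [U, hj, (hy j).1, not_lt.1 hj]

lemma volume_cornerBox_lt_top (x : Fin d → ℝ) (U : Finset (Fin d)) :
    volume (cornerBox x U) < ⊤ := by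
  rw [cornerBox, volume_pi_pi]
  exact ENNReal.prod_lt_top fun j _ => by split_ifs <;> simp

lemma measureReal_cornerBox {x : Fin d → ℝ} (hx : x ∈ unitCube d) (U : Finset (Fin d)) :
    volume.real (cornerBox x U) = cornerVolume x U := by
  rw [measureReal_def, cornerBox, volume_pi_pi, ENNReal.toReal_prod]
  refine prod_congr rfl fun j _ => ?_
  split_ifs
  · simp [(hx j trivial).2]
  · simp [(hx j trivial).1]

lemma continuous_cornerVolume (U : Finset (Fin d)) : Continuous fun x => cornerVolume x U :=
  continuous_finsetProd _ fun j _ => by split_ifs <;> fun_prop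

lemma setIntegral_unitCube_cornerVolume (U : Finset (Fin d)) :
    ∫ x in unitCube d, cornerVolume x U = 2⁻¹ ^ d := by
  have hfactor (j : Fin d) : ∫ t in Icc (0 : ℝ) 1, (if j ∈ U then 1 - t else t) = 2⁻¹ := by
    rw [integral_Icc_eq_integral_Ioc, ← intervalIntegral.integral_of_le zero_le_one]
    split_ifs
    · rw [intervalIntegral.integral_sub intervalIntegrable_const intervalIntegrable_id]
      norm_num
    · norm_num
  unfold cornerVolume
  rw [volume_pi, Measure.restrict_pi_pi,
    integral_fintype_prod_eq_prod (f := fun j t => if j ∈ U then 1 - t else t)]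
  simp [hfactor]

noncomputable def kDominanceBeta (d k : ℕ) : ℝ := 2⁻¹ ^ d * #(exceedanceSets d k)

lemma kDominanceBeta_eq (d k : ℕ) :
    kDominanceBeta d k = 2⁻¹ ^ d * ∑ j ∈ range (d - k + 1), (d.choose j : ℝ) := by
  rw [kDominanceBeta, exceedanceSets, card_filter_card_le_eq_sum_choose, Fintype.card_fin,
    Nat.cast_sum]

lemma kDominanceBeta_pos (d k : ℕ) : 0 < kDominanceBeta d k := by
  have : (∅ : Finset (Fin d)) ∈ exceedanceSets d k := by simp [exceedanceSets]
  have := card_pos.2 ⟨_, this⟩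
  unfold kDominanceBeta
  positivity

lemma kDominanceBeta_le_one (d k : ℕ) : kDominanceBeta d k ≤ 1 := by
  have : (#(exceedanceSets d k) : ℝ) ≤ 2 ^ d := by
    exact_mod_cast (card_filter_le _ _).trans_eq (by simp)
  calc kDominanceBeta d k ≤ 2⁻¹ ^ d * 2 ^ d := by unfold kDominanceBeta; gcongr
    _ = 1 := by rw [← mul_pow, inv_mul_cancel₀ two_ne_zero, one_pow]

lemma setIntegral_measureReal_kDominatingSet_le (k : ℕ) :
    ∫ x in unitCube d, volume.real (kDominatingSet k x) ≤ kDominanceBeta d k := by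
  have hint : IntegrableOn (fun x => volume.real (kDominatingSet k x)) (unitCube d) :=
    Integrable.of_bound (measurable_volume_kDominatingSet k).ennreal_toReal.aestronglyMeasurable 1
      (ae_of_all _ fun x => by
        rw [Real.norm_eq_abs, abs_of_nonneg measureReal_nonneg]
        exact measureReal_kDominatingSet_le_one k x)
  have hcorner (U : Finset (Fin d)) : IntegrableOn (fun x => cornerVolume x U) (unitCube d) :=
    (continuous_cornerVolume U).continuousOn.integrableOn_compact
      (isCompact_univ_pi fun _ => isCompact_Icc)
  have hpointwise (x : Fin d → ℝ) (hx : x ∈ unitCube d) :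
      volume.real (kDominatingSet k x) ≤ ∑ U ∈ exceedanceSets d k, cornerVolume x U :=
    calc volume.real (kDominatingSet k x)
        ≤ volume.real (⋃ U ∈ exceedanceSets d k, cornerBox x U) :=
          measureReal_mono (kDominatingSet_subset_biUnion_cornerBox k x)
            (measure_biUnion_lt_top (finite_toSet _) fun U _ => volume_cornerBox_lt_top x U).ne
      _ ≤ _ := measureReal_biUnion_finset_le _ _
      _ = _ := sum_congr rfl fun U _ => measureReal_cornerBox hx U
  calc ∫ x in unitCube d, volume.real (kDominatingSet k x)
      ≤ ∫ x in unitCube d, ∑ U ∈ exceedanceSets d k, cornerVolume x U :=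
        setIntegral_mono_on hint (integrable_finsetSum _ fun U _ => hcorner U)
          (MeasurableSet.univ_pi fun _ => measurableSet_Icc) hpointwise
    _ = kDominanceBeta d k := by
        rw [integral_finsetSum _ fun U _ => hcorner U]
        simp only [setIntegral_unitCube_cornerVolume, sum_const, nsmul_eq_mul, kDominanceBeta,
          mul_comm]

end KDominance

theorem lower_bound_EM_general (d k n : ℕ) :
    (n : ℝ) * ((2 : ℝ)⁻¹ ^ d * ∑ j ∈ Finset.range (d - k + 1), (d.choose j : ℝ)) *
        ∫ t in ((2 : ℝ)⁻¹ ^ d * ∑ j ∈ Finset.range (d - k + 1), (d.choose j : ℝ))..1,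
          t⁻¹ ^ 2 * (1 - t) ^ (n - 1) ≤
      (n : ℝ) * ∫ x in (Set.univ.pi fun _ : Fin d => Set.Icc (0 : ℝ) 1),
        (1 - (volume {y : Fin d → ℝ |
            (∀ j, y j ∈ Set.Icc (0 : ℝ) 1) ∧ KDominates k y x}).toReal) ^ (n - 1) := by
  rw [← kDominanceBeta_eq, mul_assoc]
  refine mul_le_mul_of_nonneg_left ?_ n.cast_nonneg
  calc _ ≤ (1 - kDominanceBeta d k) ^ (n - 1) :=
        mul_integral_inv_sq_mul_one_sub_pow_le (kDominanceBeta_pos d k)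
          (kDominanceBeta_le_one d k) _
    _ ≤ _ := one_sub_pow_le_integral_one_sub_pow
        (measurable_volume_kDominatingSet k).ennreal_toReal.aestronglyMeasurable
        (ae_of_all _ fun _ => measureReal_nonneg)
        (ae_of_all _ fun x => measureReal_kDominatingSet_le_one k x)
        (setIntegral_measureReal_kDominatingSet_le k) (kDominanceBeta_le_one d k) _

/-- Uniform lower bound: with `β_{d,k} = 2^{−d} ∑_{j≤d−k} binom(d,j)`,
`E[M_{d,k}(n)] = n ∫_{[0,1]^d} (1−|B_k(x)|)^{n−1} dx
  ≥ n β_{d,k} ∫_{β_{d,k}}^1 t^{−2}(1−t)^{n−1} dt`. -/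
theorem lower_bound_EM (d k n : ℕ) (hd : 2 ≤ d) (hk1 : 1 ≤ k) (hkd : k ≤ d - 1)
    (hn : 1 ≤ n) :
    (n : ℝ) * ((2 : ℝ)⁻¹ ^ d * ∑ j ∈ Finset.range (d - k + 1), (d.choose j : ℝ)) *
        ∫ t in ((2 : ℝ)⁻¹ ^ d * ∑ j ∈ Finset.range (d - k + 1), (d.choose j : ℝ))..1,
          t⁻¹ ^ 2 * (1 - t) ^ (n - 1) ≤
      (n : ℝ) * ∫ x in (Set.univ.pi fun _ : Fin d => Set.Icc (0 : ℝ) 1),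
        (1 - (volume {y : Fin d → ℝ |
            (∀ j, y j ∈ Set.Icc (0 : ℝ) 1) ∧ KDominates k y x}).toReal) ^ (n - 1) :=
  lower_bound_EM_general d k n
end

section
/- For integers n ≥ 2, the fractional part of √(2 log n / W(2 log n)) is zero if and only if n = i^{i²} for some integer i ≥ 2, in which case √(2 log n / W(2 log n)) = i. -/
/-!
Since `W e^W = 2 log n`, the quantity under the square root is `2 log n / W = e^W`, so
`s := √(2 log n / W) = e^{W/2} > 1` and `W = 2 log s`. Then `2 log n = 2 s² log s`, i.e.
`n = s^{s²}`. Conversely `n = i^{i²}` gives `W e^W = (2 log i) e^{2 log i}`, and since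
`x ↦ x e^x` is injective on `[0, ∞)`, `W = 2 log i` and `s = i`.
-/

open Real

theorem Real.strictMonoOn_mul_exp : StrictMonoOn (fun x : ℝ => x * exp x) (Set.Ici 0) :=
  fun _ ha _ _ hab => mul_lt_mul'' hab (exp_lt_exp.2 hab) ha (exp_pos _).le

theorem Int.fract_eq_zero_iff_exists_natCast_eq {R : Type*} [Ring R] [LinearOrder R]
    [IsStrictOrderedRing R] [FloorRing R] {a : R} (ha : 0 ≤ a) :
    Int.fract a = 0 ↔ ∃ i : ℕ, (i : R) = a := by
  rw [Int.fract_eq_zero_iff]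
  constructor
  · rintro ⟨z, rfl⟩
    lift z to ℕ using (by exact_mod_cast ha)
    exact ⟨z, by simp⟩
  · rintro ⟨i, rfl⟩
    exact ⟨i, by simp⟩

theorem Real.exp_half_eq_iff_eq_rpow {W x y : ℝ} (hW : 0 < W) (hx : 0 < x) (hy : 0 ≤ y)
    (h : W * exp W = 2 * log y) : exp (W / 2) = x ↔ y = x ^ (x ^ 2) := by
  have hWexp : 0 < W * exp W := by positivity
  have hy : 0 < y := hy.lt_of_ne (by rintro rfl; simp at h; linarith)
  constructor
  · rintro rfl
    apply log_injOn_pos hy (rpow_pos_of_pos (exp_pos _) _)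
    have hsq : exp (W / 2) ^ 2 = exp W := by rw [sq, ← exp_add, add_halves]
    rw [log_rpow (exp_pos _), log_exp, hsq]
    linarith
  · rintro rfl
    have hexp : exp (2 * log x) = x ^ 2 := by rw [two_mul, exp_add, exp_log hx, sq]
    have h' : W * exp W = 2 * log x * exp (2 * log x) := by
      rw [h, log_rpow hx, hexp]
      ring
    have hlog : 0 < log x := by
      rw [h', hexp] at hWexp
      exact pos_of_mul_pos_right (pos_of_mul_pos_left hWexp (sq_nonneg x)) zero_le_two
    have hW' : W = 2 * log x :=
      strictMonoOn_mul_exp.injOn hW.le (Set.mem_Ici.2 (by positivity)) h'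
    rw [hW', mul_div_cancel_left₀ _ two_ne_zero, exp_log hx]

theorem fract_sqrt_lambert_zero_iff_general (n : ℕ) (W : ℝ) (hW : 0 < W)
    (hWeq : W * Real.exp W = 2 * Real.log n) :
    (Int.fract (Real.sqrt (2 * Real.log n / W)) = 0 ↔
        ∃ i : ℕ, 2 ≤ i ∧ n = i ^ (i ^ 2)) ∧
      ∀ i : ℕ, 2 ≤ i → n = i ^ (i ^ 2) →
        Real.sqrt (2 * Real.log n / W) = i := by
  have hs : √(2 * log n / W) = exp (W / 2) := by
    rw [← hWeq, mul_div_cancel_left₀ _ hW.ne', exp_half]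
  have key (i : ℕ) (hi : 0 < i) : exp (W / 2) = i ↔ n = i ^ (i ^ 2) := by
    rw [exp_half_eq_iff_eq_rpow hW (by positivity) n.cast_nonneg hWeq, ← Nat.cast_pow,
      rpow_natCast]
    exact_mod_cast Iff.rfl
  have hs_gt_one : 1 < exp (W / 2) := one_lt_exp_iff.2 (by positivity)
  refine ⟨?_, fun i hi hni => hs.trans ((key i (by omega)).2 hni)⟩
  rw [hs, Int.fract_eq_zero_iff_exists_natCast_eq (exp_pos _).le]
  constructor
  · rintro ⟨i, hi⟩
    have hi2 : 1 < i := by exact_mod_cast hi ▸ hs_gt_one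
    exact ⟨i, hi2, (key i (by omega)).1 hi.symm⟩
  · rintro ⟨i, hi, hni⟩
    exact ⟨i, ((key i (by omega)).2 hni).symm⟩

/-- Let `W > 0` satisfy `W e^W = 2 log n` (principal Lambert `W` at `2 log n`),
`n ≥ 2`. Then the fractional part of `√(2 log n / W)` is zero iff `n = i^{i²}`
for some integer `i ≥ 2`, in which case `√(2 log n / W) = i`. -/
theorem fract_sqrt_lambert_zero_iff (n : ℕ) (hn : 2 ≤ n) (W : ℝ) (hW : 0 < W)
    (hWeq : W * Real.exp W = 2 * Real.log n) :
    (Int.fract (Real.sqrt (2 * Real.log n / W)) = 0 ↔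
        ∃ i : ℕ, 2 ≤ i ∧ n = i ^ (i ^ 2)) ∧
      ∀ i : ℕ, 2 ≤ i → n = i ^ (i ^ 2) →
        Real.sqrt (2 * Real.log n / W) = i :=
  fract_sqrt_lambert_zero_iff_general n W hW hWeq
end
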